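/- For the ASEP-derived functions, the probability sum identity: ∑_{x ≥ X} F_n(x − y; t) = F_{n+1}(X − y; t) for integers X, y with X − y ≥ 0, where the sum is over integers x ≥ X. -/

import Mathlib

/-!
Expanding `1/(m+1)_k = m!/(m+k)!` gives `F_n(m;t) = e^{-t} ∑_k (n)_k t^{m+k} / ((m+k)! k!)`, so
`∑_i F_n(m+i;t)` is `e^{-t}` times an absolutely convergent double series over `(i, k)` in which
`i` enters only through `l = i + k`. Summing along the antidiagonals `i + k = l` and using the
hockey-stick identity `∑_{k ≤ l} (a)_k / k! = (a+1)_l / l!` turns it into the series of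
`F_{n+1}(m;t)`.
-/

/-- The Pochhammer symbol `(a)_k = a (a+1) ⋯ (a+k-1)`. -/
noncomputable def poch (a : ℝ) (k : ℕ) : ℝ := ∏ i ∈ Finset.range k, (a + i)

/-- Schütz's function `F_n(m;t) = e^{-t} (t^m/m!) ∑_{k≥0} [(n)_k/(m+1)_k] t^k/k!`. -/
noncomputable def schuetzF (n : ℤ) (m : ℕ) (t : ℝ) : ℝ :=
  Real.exp (-t) * t ^ m / (m.factorial : ℝ) *
    ∑' k : ℕ, poch (n : ℝ) k / poch ((m : ℝ) + 1) k * t ^ k / (k.factorial : ℝ)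

open Finset Nat

theorem tsum_eq_tsum_sum_antidiagonal {A α : Type*} [AddCommMonoid A] [HasAntidiagonal A]
    [AddCommMonoid α] [TopologicalSpace α] [ContinuousAdd α] [T3Space α] {f : A × A → α}
    (hf : Summable f) : ∑' p, f p = ∑' n, ∑ p ∈ antidiagonal n, f p := by
  let e := HasAntidiagonal.sigmaAntidiagonalEquivProd (A := A)
  rw [← e.tsum_eq f]
  exact ((e.summable_iff.mpr hf).tsum_sigma' fun _ ↦ .of_finite).trans
    (by simp [e, tsum_fintype, sum_attach])

theorem poch_succ (a : ℝ) (k : ℕ) : poch a (k + 1) = poch a k * (a + k) :=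
  prod_range_succ _ _

theorem poch_succ' (a : ℝ) (k : ℕ) : poch a (k + 1) = a * poch (a + 1) k := by
  simp only [poch, prod_range_succ', Nat.cast_add, Nat.cast_one, Nat.cast_zero, add_zero]
  rw [mul_comm]
  congr 1
  exact prod_congr rfl fun i _ ↦ by ring

theorem factorial_mul_poch (m k : ℕ) : (m ! : ℝ) * poch (m + 1) k = ((m + k)! : ℝ) := by
  induction k with
  | zero => simp [poch]
  | succ k ih =>
    rw [poch_succ, ← mul_assoc, ih, ← add_assoc, Nat.factorial_succ]
    push_cast
    ring

theorem sum_range_poch_div_factorial (a : ℝ) (l : ℕ) :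
    ∑ k ∈ range (l + 1), poch a k / k ! = poch (a + 1) l / l ! := by
  induction l with
  | zero => simp [poch]
  | succ l ih =>
    rw [sum_range_succ, ih, poch_succ', poch_succ, Nat.factorial_succ]
    push_cast
    field_simp
    ring

theorem abs_poch_le (a : ℝ) (k : ℕ) : |poch a k| ≤ (|a| + 1) ^ k * k ! := by
  rw [poch, abs_prod, ← prod_range_add_one_eq_factorial, Nat.cast_prod, ← card_range k,
    ← prod_const, card_range, ← prod_mul_distrib]
  refine prod_le_prod (fun _ _ ↦ abs_nonneg _) fun i _ ↦ ?_
  calc |a + i| ≤ |a| + i := by simpa using abs_add_le a i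
    _ ≤ (|a| + 1) * ((i + 1 : ℕ) : ℝ) := by
        push_cast
        nlinarith [abs_nonneg a, i.cast_nonneg (α := ℝ)]

theorem schuetzF_eq_tsum (n : ℤ) (m : ℕ) (t : ℝ) :
    schuetzF n m t = Real.exp (-t) * ∑' k, poch n k * t ^ (m + k) / ((m + k)! * k !) := by
  rw [schuetzF, ← tsum_mul_left, ← tsum_mul_left]
  refine tsum_congr fun k ↦ ?_
  have : poch (m + 1) k ≠ 0 := by rw [poch]; exact prod_ne_zero_iff.mpr fun i _ ↦ by positivity
  rw [pow_add, ← factorial_mul_poch m k]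
  field_simp

theorem summable_poch_mul_pow_div_factorial (a t : ℝ) (m : ℕ) :
    Summable fun p : ℕ × ℕ ↦ poch a p.2 * t ^ (m + p.1 + p.2) / ((m + p.1 + p.2)! * p.2 !) := by
  have hi : Summable fun i ↦ |t| ^ (m + i) / (m + i)! := by
    simpa only [add_comm m] using
      (summable_nat_add_iff m).mpr (Real.summable_pow_div_factorial |t|)
  have hk := Real.summable_pow_div_factorial ((|a| + 1) * |t|)
  refine (hi.mul_of_nonneg hk (fun _ ↦ by positivity) fun _ ↦ by positivity).of_norm_bounded
    fun ⟨i, k⟩ ↦ ?_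
  -- `(m+i)! k! ≤ (m+i+k)!` splits the majorant into a product of two exponential series.
  have hfac : ((m + i)! * k ! : ℝ) ≤ (m + i + k)! := by
    exact_mod_cast Nat.le_of_dvd (by positivity) (Nat.factorial_mul_factorial_dvd_factorial_add _ _)
  calc ‖poch a k * t ^ (m + i + k) / ((m + i + k)! * k !)‖
      = |poch a k| * (|t| ^ (m + i) * |t| ^ k) / ((m + i + k)! * k !) := by
        rw [Real.norm_eq_abs, abs_div, abs_mul, abs_pow, pow_add,
          abs_of_pos (a := ((m + i + k)! * k ! : ℝ)) (by positivity)]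
    _ ≤ (|a| + 1) ^ k * k ! * (|t| ^ (m + i) * |t| ^ k) / ((m + i)! * k ! * k !) := by
        gcongr
        exact abs_poch_le a k
    _ = |t| ^ (m + i) / (m + i)! * (((|a| + 1) * |t|) ^ k / k !) := by
        field_simp
        rw [mul_pow]
        ring

theorem tsum_tsum_poch_mul_pow_div_factorial (a t : ℝ) (m : ℕ) :
    ∑' i, ∑' k, poch a k * t ^ (m + i + k) / ((m + i + k)! * k !) =
      ∑' l, poch (a + 1) l * t ^ (m + l) / ((m + l)! * l !) := by
  have hs := summable_poch_mul_pow_div_factorial a t m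
  rw [← hs.tsum_prod, tsum_eq_tsum_sum_antidiagonal hs]
  refine tsum_congr fun l ↦ ?_
  calc ∑ p ∈ antidiagonal l, poch a p.2 * t ^ (m + p.1 + p.2) / ((m + p.1 + p.2)! * p.2 !)
      = ∑ p ∈ antidiagonal l, poch a p.2 / p.2 ! * (t ^ (m + l) / (m + l)!) := by
        refine sum_congr rfl fun p hp ↦ ?_
        rw [add_assoc, mem_antidiagonal.mp hp]
        ring
    _ = (∑ k ∈ range (l + 1), poch a k / k !) * (t ^ (m + l) / (m + l)!) := by
        rw [← sum_mul, ← Nat.sum_antidiagonal_swap]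
        simp [Nat.sum_antidiagonal_eq_sum_range_succ_mk]
    _ = poch (a + 1) l * t ^ (m + l) / ((m + l)! * l !) := by
        rw [sum_range_poch_div_factorial]
        ring

theorem tsum_schuetzF_add (n : ℤ) (m : ℕ) (t : ℝ) :
    ∑' i, schuetzF n (m + i) t = schuetzF (n + 1) m t := by
  simp only [schuetzF_eq_tsum, tsum_mul_left, tsum_tsum_poch_mul_pow_div_factorial,
    Int.cast_add, Int.cast_one]

theorem sum_schuetzF_shift_general (n : ℤ) (X y : ℤ) (t : ℝ) :
    ∑' i : ℕ, schuetzF n ((X - y).toNat + i) t = schuetzF (n + 1) (X - y).toNat t :=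
  tsum_schuetzF_add n _ t

/-- For integers `X, y` with `X − y ≥ 0`,
`∑_{x ≥ X} F_n(x − y; t) = F_{n+1}(X − y; t)` (summing over integers `x ≥ X`). -/
theorem sum_schuetzF_shift (n : ℤ) (X y : ℤ) (hXy : 0 ≤ X - y) (t : ℝ) (ht : 0 ≤ t) :
    ∑' i : ℕ, schuetzF n ((X - y).toNat + i) t = schuetzF (n + 1) (X - y).toNat t :=
  sum_schuetzF_shift_general n X y t
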